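/- For every finite digraph D and capacity c ∈ ℝ₊^E, the set of fractional flames bounded by c, { f ∈ ℝ₊^E : f ≤ c and ϱ_f(v) = λ_f(v) for all v ∈ V−r }, is a polygreedoid: it contains the zero vector, and whenever x, y are in the set with ‖x‖₁ < ‖y‖₁ there is an edge e with y(e) > x(e) such that x + ε·χ_e is in the set for all sufficiently small ε > 0. -/

import Mathlib

attribute [local instance] Classical.propDecidable

/-- A finite digraph: edges `E` with tail and head maps (parallel edges allowed). -/
structure Digraph' (V E : Type) where
  tail : E → V
  head : E → V

namespace Digraph'

variable {V E : Type} [Fintype V] [Fintype E]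

/-- `es` is a directed walk from `r` to `v`. -/
def IsWalk (D : Digraph' V E) : V → V → List E → Prop
  | r, v, [] => r = v
  | r, v, e :: es => D.tail e = r ∧ D.IsWalk (D.head e) v es

/-- `es` is a directed path from `r` to `v` using only edges of `F`. -/
def IsPathIn (D : Digraph' V E) (F : Set E) (r v : V) (es : List E) : Prop :=
  D.IsWalk r v es ∧ (∀ e ∈ es, e ∈ F) ∧ (r :: es.map D.head).Nodup

/-- The members of a list of paths are pairwise edge-disjoint. -/
def EdgeDisjoint (P : List (List E)) : Prop :=
  P.Pairwise (fun p q => ∀ e, e ∈ p → e ∉ q)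

/-- The maximum number of pairwise edge-disjoint `r → v` paths inside `F`. -/
noncomputable def lam (D : Digraph' V E) (F : Set E) (r v : V) : ℕ :=
  sSup {k | ∃ P : List (List E), P.length = k ∧ (∀ p ∈ P, D.IsPathIn F r v p) ∧
    EdgeDisjoint P}

/-- The set of edges of `F` whose head is `v`. -/
def inEdges (D : Digraph' V E) (F : Set E) (v : V) : Set E := {e ∈ F | D.head e = v}

/-- The in-degree of `v` in the subgraph `F`. -/
noncomputable def indeg (D : Digraph' V E) (F : Set E) (v : V) : ℕ :=
  (D.inEdges F v).ncard

/-- `I` arises as the set of last edges of a system of pairwise edge-disjoint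
`r → v` paths in `F` (membership in the gammoid `G_F(v)`). -/
def InGammoid (D : Digraph' V E) (F : Set E) (r v : V) (I : Set E) : Prop :=
  ∃ P : List (List E), (∀ p ∈ P, D.IsPathIn F r v p) ∧ EdgeDisjoint P ∧
    I = {e | ∃ p ∈ P, p.getLast? = some e}

/-- `F` is an `r`-flame: the in-degree of each `v ≠ r` equals λ_F(r,v). -/
def IsFlame (D : Digraph' V E) (r : V) (F : Set E) : Prop :=
  ∀ v, v ≠ r → D.indeg F v = D.lam F r v

/-- Total of `x` on the in-edges of `v`. -/
noncomputable def inflow (D : Digraph' V E) (x : E → ℝ) (v : V) : ℝ :=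
  ∑ e, if D.head e = v then x e else 0

/-- Total of `x` on the out-edges of `v`. -/
noncomputable def outflow (D : Digraph' V E) (x : E → ℝ) (v : V) : ℝ :=
  ∑ e, if D.tail e = v then x e else 0

/-- Total of `x` on the edges entering the vertex set `W`. -/
noncomputable def rhoSet (D : Digraph' V E) (x : E → ℝ) (W : Set V) : ℝ :=
  ∑ e, if D.head e ∈ W ∧ D.tail e ∉ W then x e else 0

/-- `x` is a (nonnegative) `r → v` flow. -/
def IsFlow (D : Digraph' V E) (r v : V) (x : E → ℝ) : Prop :=
  (∀ e, 0 ≤ x e) ∧ (∀ u, u ≠ r → u ≠ v → D.inflow x u = D.outflow x u) ∧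
    D.inflow x r = 0 ∧ D.outflow x v = 0

/-- The flow-connectivity from `r` to `v` under capacity `c`. -/
noncomputable def lamF (D : Digraph' V E) (r v : V) (c : E → ℝ) : ℝ :=
  sSup {a | ∃ x, D.IsFlow r v x ∧ x ≤ c ∧ D.outflow x r = a}

/-- Characteristic vector of an edge. -/
noncomputable def chi (e : E) : E → ℝ := fun e' => if e' = e then 1 else 0

/-- Restriction of `x` to the in-edges of `v` (zero elsewhere). -/
noncomputable def restrictIn (D : Digraph' V E) (v : V) (x : E → ℝ) : E → ℝ :=
  fun e => if D.head e = v then x e else 0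

/-- The polygammoid `G_c(v)`: restrictions to the in-edges of `v`
of `r → v` flows bounded by `c`. -/
def polygammoid (D : Digraph' V E) (r v : V) (c : E → ℝ) : Set (E → ℝ) :=
  {s | ∃ x, D.IsFlow r v x ∧ x ≤ c ∧ D.restrictIn v x = s}

/-- `D` has no parallel edges. -/
def NoParallel (D : Digraph' V E) : Prop :=
  ∀ e e', D.tail e = D.tail e' → D.head e = D.head e' → e = e'

/-- `es` is a directed cycle. -/
def IsCycle (D : Digraph' V E) (es : List E) : Prop :=
  es ≠ [] ∧ ∃ u, D.IsWalk u u es ∧ (es.map D.head).Nodup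

/-- Characteristic vector of a list of edges. -/
noncomputable def charVec (es : List E) : E → ℝ :=
  fun e => ((es.filter (fun e' => e' = e)).length : ℝ)

end Digraph'

/-!
The zero vector is a fractional flame because `λ_0 ≡ 0`. For the augmentation property, `‖x‖₁ <
‖y‖₁` yields a vertex `v ≠ r` with `ϱ_x(v) < ϱ_y(v)`. The cut function `W ↦ ϱ_x(W)` is
submodular, so the tight `r`-`v` cuts of `x` (those of value `ϱ_x(v) = λ_x(v)`) are closed under
union, and there is a maximal one, `W`. As `ϱ_y(W) ≥ λ_y(v) = ϱ_y(v) > ϱ_x(W)`, some edge `e`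
entering `W` has `x(e) < y(e)`. By maximality of `W`, every cut of `head e` containing `tail e` has
positive slack, so raising `x(e)` by less than the smallest slack keeps `ϱ = λ` at `head e` (by the
max-flow min-cut theorem) and at every other vertex (by monotonicity of `λ`).
-/

open Filter Topology Relation

namespace Digraph'

section

variable {E : Type} {z f : E → ℝ}

/-- For `0 ≤ z ≤ f`, moving from `z` in direction `w` respects the bounds for a short time. -/
def IsFeasibleDir (z f w : E → ℝ) : Prop :=
  ∀ e, (0 < w e → z e < f e) ∧ (w e < 0 → 0 < z e)

lemma IsFeasibleDir.add {w w' : E → ℝ} (hw : IsFeasibleDir z f w)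
    (hw' : IsFeasibleDir z f w') : IsFeasibleDir z f (w + w') := by
  intro e
  constructor <;> intro h <;> simp only [Pi.add_apply] at h
  · rcases lt_or_ge 0 (w e) with h' | h'
    exacts [(hw e).1 h', (hw' e).1 (by linarith)]
  · rcases lt_or_ge (w e) 0 with h' | h'
    exacts [(hw e).2 h', (hw' e).2 (by linarith)]

lemma isFeasibleDir_smul_chi {s : ℝ} {e₀ : E} (hpos : 0 < s → z e₀ < f e₀)
    (hneg : s < 0 → 0 < z e₀) : IsFeasibleDir z f (s • chi e₀) := by
  intro e
  by_cases he : e = e₀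
  · subst he; simpa [chi] using ⟨hpos, hneg⟩
  · simp [chi, he]

lemma IsFeasibleDir.eventually_mem_box [Finite E] {w : E → ℝ} (hw : IsFeasibleDir z f w)
    (hz : ∀ e, 0 ≤ z e) (hzf : z ≤ f) :
    ∀ᶠ t in 𝓝[>] (0 : ℝ), ∀ e, 0 ≤ (z + t • w) e ∧ (z + t • w) e ≤ f e := by
  refine eventually_all.2 fun e => ?_
  have hlim : Tendsto (fun t : ℝ => z e + t * w e) (𝓝[>] 0) (𝓝 (z e)) :=
    ((continuous_const.add (continuous_id.mul continuous_const)).tendsto' 0 (z e)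
      (by simp)).mono_left nhdsWithin_le_nhds
  simp only [Pi.add_apply, Pi.smul_apply, smul_eq_mul]
  refine .and ?_ ?_
  · rcases le_or_gt 0 (w e) with h | h
    · filter_upwards [self_mem_nhdsWithin] with t (ht : 0 < t)
      nlinarith [hz e]
    · exact (hlim.eventually (lt_mem_nhds ((hw e).2 h))).mono fun _ => le_of_lt
  · rcases le_or_gt (w e) 0 with h | h
    · filter_upwards [self_mem_nhdsWithin] with t (ht : 0 < t)
      nlinarith [hzf e]
    · exact (hlim.eventually (gt_mem_nhds ((hw e).1 h))).mono fun _ => le_of_lt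

lemma le_add_smul_chi {x : E → ℝ} {ε : ℝ} (hε : 0 ≤ ε) (e₀ : E) : x ≤ x + ε • chi e₀ :=
  fun e => by by_cases he : e = e₀ <;> simp [chi, he, hε]

lemma add_smul_chi_le {x c : E → ℝ} {ε : ℝ} {e₀ : E} (hxc : x ≤ c) (hε : ε ≤ c e₀ - x e₀) :
    x + ε • chi e₀ ≤ c :=
  fun e => by by_cases he : e = e₀ <;> simp [chi, he, hxc e]; linarith

end

section

variable {V E : Type} [Fintype E] (D : Digraph' V E)

lemma sum_ite_add_smul (P : E → Prop) [DecidablePred P] (x y : E → ℝ) (t : ℝ) :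
    (∑ e, if P e then (x + t • y) e else 0) =
      (∑ e, if P e then x e else 0) + t * ∑ e, if P e then y e else 0 := by
  simp only [Finset.mul_sum, ← Finset.sum_add_distrib]
  refine Finset.sum_congr rfl fun e _ => ?_
  split_ifs <;> simp

lemma sum_ite_chi (P : E → Prop) [DecidablePred P] (e₀ : E) :
    (∑ e, if P e then chi e₀ e else 0) = if P e₀ then 1 else 0 := by
  rw [Finset.sum_eq_single e₀ (fun e _ he => by simp [chi, he]) (by simp)]
  simp [chi]

lemma sum_ite_mono (P : E → Prop) [DecidablePred P] {x y : E → ℝ} (h : x ≤ y) :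
    (∑ e, if P e then x e else 0) ≤ ∑ e, if P e then y e else 0 :=
  Finset.sum_le_sum fun e _ => by split_ifs <;> simp [h e]

lemma inflow_add_smul (x y : E → ℝ) (t : ℝ) (v : V) :
    D.inflow (x + t • y) v = D.inflow x v + t * D.inflow y v :=
  sum_ite_add_smul _ x y t

lemma outflow_add_smul (x y : E → ℝ) (t : ℝ) (v : V) :
    D.outflow (x + t • y) v = D.outflow x v + t * D.outflow y v :=
  sum_ite_add_smul _ x y t

lemma rhoSet_add_smul (x y : E → ℝ) (t : ℝ) (W : Set V) :
    D.rhoSet (x + t • y) W = D.rhoSet x W + t * D.rhoSet y W :=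
  sum_ite_add_smul (fun e => D.head e ∈ W ∧ D.tail e ∉ W) x y t

lemma inflow_chi (e₀ : E) (v : V) : D.inflow (chi e₀) v = if D.head e₀ = v then 1 else 0 :=
  sum_ite_chi _ e₀

lemma outflow_chi (e₀ : E) (v : V) : D.outflow (chi e₀) v = if D.tail e₀ = v then 1 else 0 :=
  sum_ite_chi _ e₀

lemma rhoSet_chi (e₀ : E) (W : Set V) :
    D.rhoSet (chi e₀) W = if D.head e₀ ∈ W ∧ D.tail e₀ ∉ W then 1 else 0 :=
  sum_ite_chi (fun e => D.head e ∈ W ∧ D.tail e ∉ W) e₀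

lemma rhoSet_mono {x y : E → ℝ} (h : x ≤ y) (W : Set V) : D.rhoSet x W ≤ D.rhoSet y W :=
  sum_ite_mono (fun e => D.head e ∈ W ∧ D.tail e ∉ W) h

lemma rhoSet_nonneg {x : E → ℝ} (hx : ∀ e, 0 ≤ x e) (W : Set V) : 0 ≤ D.rhoSet x W := by
  simpa [rhoSet] using D.rhoSet_mono (x := 0) hx W

lemma inflow_zero (v : V) : D.inflow 0 v = 0 := by
  simp [inflow]

lemma outflow_zero (v : V) : D.outflow 0 v = 0 := by
  simp [outflow]

lemma inflow_eq_zero_of_forall_head_ne {r : V} (hr : ∀ e, D.head e ≠ r) (x : E → ℝ) :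
    D.inflow x r = 0 := by
  simp [inflow, hr]

lemma outflow_le_sum {x : E → ℝ} (hx : ∀ e, 0 ≤ x e) (v : V) : D.outflow x v ≤ ∑ e, x e :=
  Finset.sum_le_sum fun e _ => by split_ifs <;> simp [hx e]

lemma rhoSet_singleton_le_inflow {x : E → ℝ} (hx : ∀ e, 0 ≤ x e) (v : V) :
    D.rhoSet x {v} ≤ D.inflow x v :=
  Finset.sum_le_sum fun e _ => by split_ifs <;> simp_all [hx e]

lemma rhoSet_union_add_inter_le {x : E → ℝ} (hx : ∀ e, 0 ≤ x e) (A B : Set V) :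
    D.rhoSet x (A ∪ B) + D.rhoSet x (A ∩ B) ≤ D.rhoSet x A + D.rhoSet x B := by
  simp only [rhoSet, ← Finset.sum_add_distrib]
  refine Finset.sum_le_sum fun e _ => ?_
  have := hx e
  by_cases D.head e ∈ A <;> by_cases D.head e ∈ B <;> by_cases D.tail e ∈ A <;>
    by_cases D.tail e ∈ B <;> simp_all

lemma isFlow_zero (r v : V) : D.IsFlow r v 0 :=
  ⟨fun _ => le_rfl, fun u _ _ => by rw [inflow_zero, outflow_zero], D.inflow_zero r,
    D.outflow_zero v⟩

lemma bddAbove_flowValues (r v : V) (f : E → ℝ) :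
    BddAbove {a | ∃ x, D.IsFlow r v x ∧ x ≤ f ∧ D.outflow x r = a} := by
  refine ⟨∑ e, f e, ?_⟩
  rintro a ⟨x, hx, hxf, rfl⟩
  exact (D.outflow_le_sum hx.1 r).trans (Finset.sum_le_sum fun e _ => hxf e)

variable {D} {r v : V} {x f g : E → ℝ}

lemma IsFlow.outflow_le_lamF (hx : D.IsFlow r v x) (hxf : x ≤ f) :
    D.outflow x r ≤ D.lamF r v f :=
  le_csSup (D.bddAbove_flowValues r v f) ⟨x, hx, hxf, rfl⟩

lemma lamF_le {b : ℝ} (hf : ∀ e, 0 ≤ f e)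
    (h : ∀ x, D.IsFlow r v x → x ≤ f → D.outflow x r ≤ b) : D.lamF r v f ≤ b :=
  csSup_le ⟨0, 0, D.isFlow_zero r v, hf, D.outflow_zero r⟩ fun _ ⟨x, hx, hxf, hxa⟩ =>
    hxa ▸ h x hx hxf

lemma lamF_nonneg (hf : ∀ e, 0 ≤ f e) : 0 ≤ D.lamF r v f :=
  D.outflow_zero r ▸ (D.isFlow_zero r v).outflow_le_lamF hf

lemma lamF_mono (hf : ∀ e, 0 ≤ f e) (hfg : f ≤ g) : D.lamF r v f ≤ D.lamF r v g :=
  lamF_le hf fun _ hx hxf => hx.outflow_le_lamF (hxf.trans hfg)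

lemma lamF_zero : D.lamF r v 0 = 0 :=
  le_antisymm (lamF_le (fun _ => le_rfl) fun _ hx hxf =>
      (D.outflow_le_sum hx.1 r).trans (Finset.sum_nonpos fun e _ => hxf e))
    (lamF_nonneg fun _ => le_rfl)

lemma continuous_inflow (v : V) : Continuous fun x : E → ℝ => D.inflow x v :=
  continuous_finsetSum _ fun e _ => by split_ifs <;> fun_prop

lemma continuous_outflow (v : V) : Continuous fun x : E → ℝ => D.outflow x v :=
  continuous_finsetSum _ fun e _ => by split_ifs <;> fun_prop

lemma isClosed_setOf_isFlow (r v : V) : IsClosed {x : E → ℝ | D.IsFlow r v x} := by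
  simp only [IsFlow, Set.ofPred_and, Set.ofPred_forall]
  exact (isClosed_iInter fun e => isClosed_le continuous_const (continuous_apply e)).inter
    ((isClosed_iInter fun u => isClosed_iInter fun _ => isClosed_iInter fun _ =>
      isClosed_eq (D.continuous_inflow u) (D.continuous_outflow u)).inter
    ((isClosed_eq (D.continuous_inflow r) continuous_const).inter
      (isClosed_eq (D.continuous_outflow v) continuous_const)))

lemma exists_isFlow_outflow_eq_lamF (r v : V) (hf : ∀ e, 0 ≤ f e) :
    ∃ x, D.IsFlow r v x ∧ x ≤ f ∧ D.outflow x r = D.lamF r v f := by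
  have hK : IsCompact {x | D.IsFlow r v x ∧ x ≤ f} :=
    isCompact_Icc.of_isClosed_subset
      ((D.isClosed_setOf_isFlow r v).inter (isClosed_le continuous_id continuous_const))
      fun x hx => ⟨hx.1.1, hx.2⟩
  obtain ⟨x, hx, hmax⟩ :=
    hK.exists_isMaxOn ⟨0, D.isFlow_zero r v, hf⟩ (D.continuous_outflow r).continuousOn
  exact ⟨x, hx.1, hx.2, le_antisymm (hx.1.outflow_le_lamF hx.2)
    (lamF_le hf fun y hy hyf => hmax ⟨hy, hyf⟩)⟩

lemma IsFlow.eq_zero_of_tail_eq (hx : D.IsFlow r v x) {e : E} (he : D.tail e = v) : x e = 0 := by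
  have hsum := (Finset.sum_eq_zero_iff_of_nonneg fun e _ => by
    split_ifs <;> simp [hx.1 e]).1 hx.2.2.2 e (Finset.mem_univ e)
  simpa [he] using hsum

/-- An arc of the residual graph of `z` under the capacity `f`. Arcs leaving `u` are omitted,
so that augmenting along a path keeps the outflow of the sink `u` at zero. -/
def ResidualAdj (z f : E → ℝ) (u p a : V) : Prop :=
  p ≠ u ∧ ∃ e, (D.tail e = p ∧ D.head e = a ∧ z e < f e) ∨
    (D.head e = p ∧ D.tail e = a ∧ 0 < z e)

variable {z : E → ℝ} {u : V}

lemma exists_feasibleDir_of_reflTransGen {a : V} (h : ReflTransGen (D.ResidualAdj z f u) r a) :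
    ∃ w, IsFeasibleDir z f w ∧ (∀ e, D.tail e = u → w e ≤ 0) ∧
      ∀ b, D.inflow w b - D.outflow w b = (if a = b then 1 else 0) - (if r = b then 1 else 0) := by
  induction h with
  | refl =>
    exact ⟨0, fun e => by simp, fun e _ => le_rfl, fun b => by simp [inflow_zero, outflow_zero]⟩
  | tail _ hstep ih =>
    obtain ⟨w, hw, hwu, hnet⟩ := ih
    obtain ⟨hpu, e, ⟨ht, hh, hlt⟩ | ⟨hh, ht, hpos⟩⟩ := hstep
    · refine ⟨w + (1 : ℝ) • chi e,
        hw.add (isFeasibleDir_smul_chi (s := 1) (fun _ => hlt) (by norm_num)),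
        fun e' he' => ?_, fun b => ?_⟩
      · have : e' ≠ e := by rintro rfl; exact hpu (ht ▸ he')
        simpa [chi, this] using hwu e' he'
      · rw [inflow_add_smul, outflow_add_smul, inflow_chi, outflow_chi, ht, hh]
        linear_combination hnet b
    · refine ⟨w + (-1 : ℝ) • chi e,
        hw.add (isFeasibleDir_smul_chi (s := -1) (by norm_num) fun _ => hpos),
        fun e' he' => ?_, fun b => ?_⟩
      · have := hwu e' he'
        simp only [chi, Pi.add_apply, Pi.smul_apply, smul_eq_mul]
        split_ifs <;> linarith
      · rw [inflow_add_smul, outflow_add_smul, inflow_chi, outflow_chi, ht, hh]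
        linear_combination hnet b

lemma not_reflTransGen_of_outflow_eq_lamF (hr : ∀ e, D.head e ≠ r) (hu : u ≠ r)
    (hz : D.IsFlow r u z) (hzf : z ≤ f) (hmax : D.outflow z r = D.lamF r u f) :
    ¬ ReflTransGen (D.ResidualAdj z f u) r u := by
  intro h
  obtain ⟨w, hw, hwu, hnet⟩ := D.exists_feasibleDir_of_reflTransGen h
  obtain ⟨t, hbox, ht⟩ := ((hw.eventually_mem_box hz.1 hzf).and self_mem_nhdsWithin).exists
  have hwu0 : D.outflow w u = 0 := Finset.sum_eq_zero fun e _ => by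
    split_ifs with he
    · refine le_antisymm (hwu e he) (not_lt.1 fun hneg => ?_)
      exact (hw e).2 hneg |>.ne' (hz.eq_zero_of_tail_eq he)
    · rfl
  have hflow : D.IsFlow r u (z + t • w) := by
    refine ⟨fun e => (hbox e).1, fun b hbr hbu => ?_, D.inflow_eq_zero_of_forall_head_ne hr _, ?_⟩
    · have := hnet b
      rw [if_neg (Ne.symm hbu), if_neg (Ne.symm hbr)] at this
      rw [inflow_add_smul, outflow_add_smul, hz.2.1 b hbr hbu]
      linear_combination t * this
    · rw [outflow_add_smul, hz.2.2.2, hwu0, mul_zero, add_zero]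
  have hval : D.outflow (z + t • w) r = D.outflow z r + t := by
    have := hnet r
    rw [if_neg hu, if_pos rfl, D.inflow_eq_zero_of_forall_head_ne hr] at this
    rw [outflow_add_smul]
    linear_combination -t * this
  linarith [hflow.outflow_le_lamF fun e => (hbox e).2, (ht : (0 : ℝ) < t)]

end

section

variable {V E : Type} [Fintype V] [Fintype E] (D : Digraph' V E)

lemma sum_inflow (x : E → ℝ) : ∑ v, D.inflow x v = ∑ e, x e := by
  simp only [inflow]
  rw [Finset.sum_comm]
  simp

lemma sum_outflow (x : E → ℝ) : ∑ v, D.outflow x v = ∑ e, x e := by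
  simp only [outflow]
  rw [Finset.sum_comm]
  simp

lemma sum_inflow_sub_outflow (x : E → ℝ) (W : Set V) :
    ∑ v with v ∈ W, (D.inflow x v - D.outflow x v) = D.rhoSet x W - D.rhoSet x Wᶜ := by
  simp only [inflow, outflow, rhoSet, ← Finset.sum_sub_distrib]
  rw [Finset.sum_comm]
  refine Finset.sum_congr rfl fun e _ => ?_
  by_cases D.head e ∈ W <;> by_cases D.tail e ∈ W <;> simp_all

variable {D} {r v : V} {x f : E → ℝ}

lemma IsFlow.outflow_source_eq_inflow (hx : D.IsFlow r v x) (hv : v ≠ r) :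
    D.outflow x r = D.inflow x v := by
  have htotal : ∑ u, (D.inflow x u - D.outflow x u) = 0 := by
    rw [Finset.sum_sub_distrib, sum_inflow, sum_outflow, sub_self]
  rw [Fintype.sum_eq_add v r hv fun u hu => by rw [hx.2.1 u hu.2 hu.1, sub_self],
    hx.2.2.1, hx.2.2.2] at htotal
  linarith

lemma IsFlow.inflow_eq_rhoSet_sub (hx : D.IsFlow r v x) {W : Set V} (hvW : v ∈ W)
    (hrW : r ∉ W) : D.inflow x v = D.rhoSet x W - D.rhoSet x Wᶜ := by
  rw [← sum_inflow_sub_outflow, Finset.sum_eq_single_of_mem v (by simpa using hvW), hx.2.2.2,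
    sub_zero]
  intro u hu huv
  rw [hx.2.1 u (by rintro rfl; simp_all) huv, sub_self]

lemma IsFlow.outflow_le_rhoSet (hx : D.IsFlow r v x) (hv : v ≠ r) (hxf : x ≤ f) {W : Set V}
    (hvW : v ∈ W) (hrW : r ∉ W) : D.outflow x r ≤ D.rhoSet f W := by
  rw [hx.outflow_source_eq_inflow hv, hx.inflow_eq_rhoSet_sub hvW hrW]
  linarith [D.rhoSet_nonneg hx.1 Wᶜ, D.rhoSet_mono hxf W]

lemma lamF_le_rhoSet (hv : v ≠ r) (hf : ∀ e, 0 ≤ f e) {W : Set V} (hvW : v ∈ W)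
    (hrW : r ∉ W) : D.lamF r v f ≤ D.rhoSet f W :=
  lamF_le hf fun _ hx hxf => hx.outflow_le_rhoSet hv hxf hvW hrW

lemma lamF_le_inflow (hv : v ≠ r) (hf : ∀ e, 0 ≤ f e) : D.lamF r v f ≤ D.inflow f v :=
  (lamF_le_rhoSet hv hf (Set.mem_singleton v) (by simpa using hv.symm)).trans
    (D.rhoSet_singleton_le_inflow hf v)

/-- Max-flow min-cut: a maximum flow exists by compactness, and the vertices that its residual
graph does not reach from `r` form a cut that it saturates. -/
theorem exists_cut_rhoSet_eq_lamF (hr : ∀ e, D.head e ≠ r) (hu : u ≠ r) (hf : ∀ e, 0 ≤ f e) :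
    ∃ W, u ∈ W ∧ r ∉ W ∧ D.rhoSet f W = D.lamF r u f := by
  obtain ⟨z, hz, hzf, hmax⟩ := D.exists_isFlow_outflow_eq_lamF r u hf
  set W := {a | ¬ ReflTransGen (D.ResidualAdj z f u) r a}
  have huW : u ∈ W := D.not_reflTransGen_of_outflow_eq_lamF hr hu hz hzf hmax
  have hrW : r ∉ W := fun h => h ReflTransGen.refl
  have hne : ∀ p, ReflTransGen (D.ResidualAdj z f u) r p → p ≠ u := fun p hp hpu =>
    huW (hpu ▸ hp)
  have hsat : D.rhoSet z W = D.rhoSet f W := Finset.sum_congr rfl fun e _ => by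
    split_ifs with he
    · have htail : ReflTransGen (D.ResidualAdj z f u) r (D.tail e) := not_not.1 he.2
      by_contra hlt
      exact he.1 (htail.tail ⟨hne _ htail, e, Or.inl ⟨rfl, rfl, lt_of_le_of_ne (hzf e) hlt⟩⟩)
    · rfl
  have hback : D.rhoSet z Wᶜ = 0 := Finset.sum_eq_zero fun e _ => by
    split_ifs with he
    · have hhead : ReflTransGen (D.ResidualAdj z f u) r (D.head e) := by simpa [W] using he.1
      by_contra hpos
      have htail := hhead.tail (c := D.tail e)
        ⟨hne _ hhead, e, Or.inr ⟨rfl, rfl, lt_of_le_of_ne (hz.1 e) (Ne.symm hpos)⟩⟩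
      exact he.2 (by simpa [W] using htail)
    · rfl
  refine ⟨W, huW, hrW, ?_⟩
  rw [← hsat, ← hmax, hz.outflow_source_eq_inflow hu, hz.inflow_eq_rhoSet_sub huW hrW, hback,
    sub_zero]

end

def IsFracFlame {V E : Type} [Fintype E] (D : Digraph' V E) (r : V) (x : E → ℝ) : Prop :=
  ∀ v, v ≠ r → D.inflow x v = D.lamF r v x

/-- For a fractional flame `x`, these are exactly the minimum `r`-`v` cuts. -/
def IsTightCut {V E : Type} [Fintype E] (D : Digraph' V E) (x : E → ℝ) (r v : V) (W : Set V) :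
    Prop :=
  v ∈ W ∧ r ∉ W ∧ D.rhoSet x W ≤ D.inflow x v

section

variable {V E : Type} [Fintype V] [Fintype E] {D : Digraph' V E} {r u v : V} {x : E → ℝ}

lemma IsFracFlame.inflow_le_rhoSet (hx : D.IsFracFlame r x) (hx0 : ∀ e, 0 ≤ x e) (hv : v ≠ r)
    {W : Set V} (hvW : v ∈ W) (hrW : r ∉ W) : D.inflow x v ≤ D.rhoSet x W :=
  hx v hv ▸ lamF_le_rhoSet hv hx0 hvW hrW

lemma IsFracFlame.isTightCut_union (hx : D.IsFracFlame r x) (hx0 : ∀ e, 0 ≤ x e) (hu : u ≠ r)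
    {W W' : Set V} (hW : D.IsTightCut x r v W) (hW' : D.IsTightCut x r u W') (huW : u ∈ W) :
    D.IsTightCut x r v (W ∪ W') := by
  refine ⟨Or.inl hW.1, fun h => h.elim hW.2.1 hW'.2.1, ?_⟩
  linarith [D.rhoSet_union_add_inter_le hx0 W W', hW.2.2, hW'.2.2,
    hx.inflow_le_rhoSet hx0 hu (W := W ∩ W') ⟨huW, hW'.1⟩ fun h => hW.2.1 h.1]

/-- The edge enters a maximal tight cut of `v`. -/
lemma IsFracFlame.exists_edge_lt {y : E → ℝ} (hx : D.IsFracFlame r x) (hx0 : ∀ e, 0 ≤ x e)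
    (hy : D.IsFracFlame r y) (hy0 : ∀ e, 0 ≤ y e) (hv : v ≠ r)
    (hlt : D.inflow x v < D.inflow y v) :
    ∃ e, x e < y e ∧ ∀ W, D.head e ∈ W → r ∉ W → D.tail e ∈ W →
      D.inflow x (D.head e) < D.rhoSet x W := by
  obtain ⟨W, hW, hWmax⟩ := Set.Finite.exists_maximal (s := {W | D.IsTightCut x r v W})
    (Set.toFinite _)
    ⟨{v}, show D.IsTightCut x r v {v} from ⟨rfl, hv.symm, D.rhoSet_singleton_le_inflow hx0 v⟩⟩
  have hxy : D.rhoSet x W < D.rhoSet y W := calc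
    D.rhoSet x W ≤ D.inflow x v := hW.2.2
    _ < D.inflow y v := hlt
    _ ≤ D.rhoSet y W := hy.inflow_le_rhoSet hy0 hv hW.1 hW.2.1
  obtain ⟨e, he, hxye⟩ : ∃ e, (D.head e ∈ W ∧ D.tail e ∉ W) ∧ x e < y e := by
    by_contra! h
    exact hxy.not_ge (Finset.sum_le_sum fun e _ => by split_ifs with he; exacts [h e he, le_rfl])
  have hur : D.head e ≠ r := fun h => hW.2.1 (h ▸ he.1)
  refine ⟨e, hxye, fun W' huW' hrW' htW' =>
    (hx.inflow_le_rhoSet hx0 hur huW' hrW').lt_of_ne fun heq => he.2 ?_⟩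
  exact hWmax (hx.isTightCut_union hx0 hur hW ⟨huW', hrW', heq.ge⟩ he.1)
    Set.subset_union_left (Set.subset_union_right htW')

lemma IsFracFlame.add_smul_chi (hr : ∀ e, D.head e ≠ r) (hx : D.IsFracFlame r x)
    (hx0 : ∀ e, 0 ≤ x e) {e₀ : E} {ε : ℝ} (hε : 0 ≤ ε)
    (hcut : ∀ W, D.head e₀ ∈ W → r ∉ W → D.tail e₀ ∈ W →
      D.inflow x (D.head e₀) + ε ≤ D.rhoSet x W) :
    D.IsFracFlame r (x + ε • chi e₀) := by
  have hxx' := le_add_smul_chi (x := x) hε e₀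
  have hx'0 : ∀ e, 0 ≤ (x + ε • chi e₀) e := fun e => (hx0 e).trans (hxx' e)
  intro b hb
  refine le_antisymm ?_ (lamF_le_inflow hb hx'0)
  rw [inflow_add_smul, inflow_chi]
  by_cases hbu : D.head e₀ = b
  · subst hbu
    obtain ⟨W, huW, hrW, hW⟩ := D.exists_cut_rhoSet_eq_lamF hr hb hx'0
    rw [← hW, rhoSet_add_smul, rhoSet_chi, if_pos rfl, mul_one]
    by_cases ht : D.tail e₀ ∈ W
    · rw [if_neg fun h => h.2 ht, mul_zero, add_zero]
      exact hcut W huW hrW ht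
    · rw [if_pos ⟨huW, ht⟩, mul_one]
      linarith [hx.inflow_le_rhoSet hx0 hb huW hrW]
  · rw [if_neg hbu, mul_zero, add_zero, hx b hb]
    exact lamF_mono hx0 hxx'

lemma IsFracFlame.eventually_add_smul_chi (hr : ∀ e, D.head e ≠ r) (hx : D.IsFracFlame r x)
    (hx0 : ∀ e, 0 ≤ x e) {e₀ : E}
    (hcut : ∀ W, D.head e₀ ∈ W → r ∉ W → D.tail e₀ ∈ W → D.inflow x (D.head e₀) < D.rhoSet x W) :
    ∀ᶠ ε in 𝓝[>] (0 : ℝ), D.IsFracFlame r (x + ε • chi e₀) := by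
  have hslack : ∀ᶠ ε in 𝓝[>] (0 : ℝ), ∀ W : Set V, D.head e₀ ∈ W → r ∉ W → D.tail e₀ ∈ W →
      D.inflow x (D.head e₀) + ε ≤ D.rhoSet x W := by
    refine eventually_all.2 fun W => ?_
    by_cases hW : D.head e₀ ∈ W ∧ r ∉ W ∧ D.tail e₀ ∈ W
    · filter_upwards [eventually_nhdsWithin_of_eventually_nhds
        (eventually_lt_nhds (sub_pos.2 (hcut W hW.1 hW.2.1 hW.2.2)))] with ε hε _ _ _
      linarith
    · exact Eventually.of_forall fun ε h₁ h₂ h₃ => absurd ⟨h₁, h₂, h₃⟩ hW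
  filter_upwards [hslack, self_mem_nhdsWithin] with ε hε (hpos : 0 < ε)
  exact hx.add_smul_chi hr hx0 hpos.le hε

end

end Digraph'

open Digraph' in
theorem stmt13_general {V E : Type} [Fintype V] [Fintype E] (D : Digraph' V E)
    (r : V) (hr : ∀ e, D.head e ≠ r)
    (c : E → ℝ) (hc : ∀ e, 0 ≤ c e) :
    (0 : E → ℝ) ∈ {f : E → ℝ | (∀ e, 0 ≤ f e) ∧ f ≤ c ∧
        ∀ v, v ≠ r → D.inflow f v = D.lamF r v f} ∧
    ∀ x ∈ {f : E → ℝ | (∀ e, 0 ≤ f e) ∧ f ≤ c ∧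
        ∀ v, v ≠ r → D.inflow f v = D.lamF r v f},
      ∀ y ∈ {f : E → ℝ | (∀ e, 0 ≤ f e) ∧ f ≤ c ∧
        ∀ v, v ≠ r → D.inflow f v = D.lamF r v f},
      (∑ e, |x e|) < (∑ e, |y e|) →
      ∃ e, x e < y e ∧ ∃ ε₀ > (0:ℝ), ∀ ε : ℝ, 0 < ε → ε ≤ ε₀ →
        (x + ε • chi e) ∈ {f : E → ℝ | (∀ e, 0 ≤ f e) ∧ f ≤ c ∧
          ∀ v, v ≠ r → D.inflow f v = D.lamF r v f} := by
  refine ⟨⟨fun _ => le_rfl, hc, fun v _ => by rw [inflow_zero, lamF_zero]⟩, ?_⟩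
  rintro x ⟨hx0, hxc, hx⟩ y ⟨hy0, hyc, hy⟩ hxy
  simp only [abs_of_nonneg (hx0 _), abs_of_nonneg (hy0 _), ← sum_inflow D] at hxy
  obtain ⟨v, -, hv⟩ := Finset.exists_lt_of_sum_lt hxy
  have hvr : v ≠ r := by
    rintro rfl
    simp [inflow_eq_zero_of_forall_head_ne D hr] at hv
  obtain ⟨e, hxye, hcut⟩ := IsFracFlame.exists_edge_lt hx hx0 hy hy0 hvr hv
  have hcap : ∀ᶠ ε in 𝓝[>] (0 : ℝ), ε < c e - x e :=
    eventually_nhdsWithin_of_eventually_nhds (eventually_lt_nhds (by linarith [hyc e]))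
  obtain ⟨ε₀, hε₀, hsub⟩ := mem_nhdsGT_iff_exists_Ioc_subset.1
    ((IsFracFlame.eventually_add_smul_chi hr hx hx0 hcut).and hcap)
  refine ⟨e, hxye, ε₀, hε₀, fun ε hε hεε₀ => ?_⟩
  obtain ⟨hflame, hεc⟩ := hsub ⟨hε, hεε₀⟩
  exact ⟨fun e' => (hx0 e').trans (le_add_smul_chi hε.le e e'), add_smul_chi_le hxc hεc.le,
    hflame⟩

open Digraph' in
/-- The fractional flames bounded by `c` form a polygreedoid: the zero vector
belongs to it, and the continuous augmentation property holds. -/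
theorem stmt13 {V E : Type} [Fintype V] [Fintype E] (D : Digraph' V E)
    (hsimple : D.NoParallel) (r : V) (hr : ∀ e, D.head e ≠ r)
    (c : E → ℝ) (hc : ∀ e, 0 ≤ c e) :
    (0 : E → ℝ) ∈ {f : E → ℝ | (∀ e, 0 ≤ f e) ∧ f ≤ c ∧
        ∀ v, v ≠ r → D.inflow f v = D.lamF r v f} ∧
    ∀ x ∈ {f : E → ℝ | (∀ e, 0 ≤ f e) ∧ f ≤ c ∧
        ∀ v, v ≠ r → D.inflow f v = D.lamF r v f},
      ∀ y ∈ {f : E → ℝ | (∀ e, 0 ≤ f e) ∧ f ≤ c ∧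
        ∀ v, v ≠ r → D.inflow f v = D.lamF r v f},
      (∑ e, |x e|) < (∑ e, |y e|) →
      ∃ e, x e < y e ∧ ∃ ε₀ > (0:ℝ), ∀ ε : ℝ, 0 < ε → ε ≤ ε₀ →
        (x + ε • chi e) ∈ {f : E → ℝ | (∀ e, 0 ≤ f e) ∧ f ≤ c ∧
          ∀ v, v ≠ r → D.inflow f v = D.lamF r v f} :=
  stmt13_general D r hr c hc
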